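/- arXiv:quant-ph/0502155 — 2 statements merged into one kernel-verified Lean document; each statement's English description precedes it below -/
import Mathlib

section
/- Let g be a symmetric positive-definite real m×m matrix with inverse entries g^{αβ}, let F_1,…,F_m, C_0, V_1,…,V_m, Q be Hermitian n×n complex matrices, let L, R_1,…,R_k be n×n complex matrices, and let P be a positive semidefinite Hermitian n×n matrix with tr(P) = 1. Set w(u,P) := i[P, Σ_α u^α V_α] + Σ_j (R_j P R_j† − ½R_j†R_j P − ½P R_j†R_j) + (L P L† − ½L†L P − ½P L†L) and c_α := tr(P·F_α) + Re tr( i[P,V_α]·Q ). Then sup_{u∈ℝ^m} { −Re tr( w(u,P)·Q ) − Re tr( P·(½ g_{αβ}u^α u^β I + u^α F_α + C_0) ) } = ½ Σ_{α,β} g^{αβ} c_α c_β − Re tr( P·( C_0 + Σ_j (R_j†QR_j − ½R_j†R_jQ − ½QR_j†R_j) + (L†QL − ½L†LQ − ½QL†L) ) ). -/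
/-!
By cyclicity of the trace, each dissipative part `A P A† - ½{A†A, P}` of the drift pairs with `Q`
exactly as `P` pairs with the adjoint dissipator `A†QA - ½{A†A, Q}`, so that contribution does not
depend on the control. The Hamiltonian part of the drift and the cost are affine in `u` (using
`tr P = 1`) with linear coefficient `c`, so the objective is the concave quadratic
`-c·u - ½ uᵀ g u` minus a constant. Completing the square with respect to the positive definite
`g` shows that its supremum is `½ cᵀ g⁻¹ c`, attained at `u = -g⁻¹ c`.
-/

open Matrix
open scoped ComplexOrder

namespace Matrix

section QuadraticForm

variable {ι R : Type*} [Fintype ι] [CommRing R]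

lemma dotProduct_mulVec_eq_sum_sum (A : Matrix ι ι R) (x y : ι → R) :
    x ⬝ᵥ A *ᵥ y = ∑ i, ∑ j, A i j * x i * y j := by
  simp only [dotProduct, mulVec, Finset.mul_sum]
  exact Finset.sum_congr rfl fun i _ => Finset.sum_congr rfl fun j _ => by ring

lemma IsSymm.dotProduct_mulVec_comm {A : Matrix ι ι R} (hA : A.IsSymm) (x y : ι → R) :
    x ⬝ᵥ A *ᵥ y = y ⬝ᵥ A *ᵥ x := by
  rw [dotProduct_mulVec, ← mulVec_transpose, hA.eq, dotProduct_comm]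

variable [DecidableEq ι]

lemma IsSymm.dotProduct_mulVec_add_inv_mulVec {g : Matrix ι ι R} (hg : g.IsSymm)
    (hdet : IsUnit g.det) (c u : ι → R) :
    (u + g⁻¹ *ᵥ c) ⬝ᵥ g *ᵥ (u + g⁻¹ *ᵥ c)
      = u ⬝ᵥ g *ᵥ u + 2 * (c ⬝ᵥ u) + c ⬝ᵥ g⁻¹ *ᵥ c := by
  have hgc : g *ᵥ (g⁻¹ *ᵥ c) = c := by
    rw [mulVec_mulVec, mul_nonsing_inv g hdet, one_mulVec]
  rw [mulVec_add, hgc, dotProduct_add, add_dotProduct, add_dotProduct,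
    hg.dotProduct_mulVec_comm (g⁻¹ *ᵥ c) u, hgc, dotProduct_comm u c, dotProduct_comm _ c]
  ring

lemma PosDef.iSup_neg_dotProduct_sub_half_dotProduct_mulVec_sub {g : Matrix ι ι ℝ}
    (hg : g.PosDef) (c : ι → ℝ) (K : ℝ) :
    ⨆ u : ι → ℝ, (-(c ⬝ᵥ u) - 1 / 2 * (u ⬝ᵥ g *ᵥ u) - K) = 1 / 2 * (c ⬝ᵥ g⁻¹ *ᵥ c) - K := by
  have hsquare := (isHermitian_iff_isSymm.mp hg.isHermitian).dotProduct_mulVec_add_inv_mulVec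
    ((isUnit_iff_isUnit_det g).mp hg.isUnit) c
  have hle : ∀ u, -(c ⬝ᵥ u) - 1 / 2 * (u ⬝ᵥ g *ᵥ u) - K ≤ 1 / 2 * (c ⬝ᵥ g⁻¹ *ᵥ c) - K := by
    intro u
    have hnonneg := hg.posSemidef.dotProduct_mulVec_nonneg (u + g⁻¹ *ᵥ c)
    simp only [star_trivial, hsquare] at hnonneg
    linarith
  have hmax : -(c ⬝ᵥ -(g⁻¹ *ᵥ c)) - 1 / 2 * (-(g⁻¹ *ᵥ c) ⬝ᵥ g *ᵥ -(g⁻¹ *ᵥ c)) - K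
      = 1 / 2 * (c ⬝ᵥ g⁻¹ *ᵥ c) - K := by
    have hzero := hsquare (-(g⁻¹ *ᵥ c))
    rw [neg_add_cancel, zero_dotProduct, dotProduct_neg] at hzero
    rw [dotProduct_neg c]
    linarith
  exact le_antisymm (ciSup_le hle) (hmax ▸ le_ciSup ⟨_, Set.forall_mem_range.mpr hle⟩ _)

end QuadraticForm

section Trace

variable {n ι : Type*} [Fintype n] [Fintype ι]

lemma trace_dissipator_mul {𝕜 : Type*} [Field 𝕜] [Star 𝕜] (A P Q : Matrix n n 𝕜) :
    ((A * P * Aᴴ - (1 / 2 : 𝕜) • (Aᴴ * A * P) - (1 / 2 : 𝕜) • (P * (Aᴴ * A))) * Q).trace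
      = (P * (Aᴴ * Q * A - (1 / 2 : 𝕜) • (Aᴴ * A * Q) - (1 / 2 : 𝕜) • (Q * (Aᴴ * A)))).trace := by
  have hjump : (A * P * Aᴴ * Q).trace = (P * (Aᴴ * Q * A)).trace := by
    rw [mul_assoc, trace_mul_comm, ← mul_assoc, trace_mul_comm]
  have hanticomm : (Aᴴ * A * P * Q).trace = (P * (Q * (Aᴴ * A))).trace := by
    rw [mul_assoc, trace_mul_comm, mul_assoc]
  simp only [sub_mul, smul_mul_assoc, mul_sub, mul_smul_comm, trace_sub, trace_smul]
  rw [hjump, hanticomm, mul_assoc P]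
  ring

variable {R : Type*} [CommRing R]

lemma trace_smul_commutator_sum_mul (z : R) (a : ι → R) (V : ι → Matrix n n R)
    (P Q : Matrix n n R) :
    ((z • (P * ∑ α, a α • V α - (∑ α, a α • V α) * P)) * Q).trace
      = ∑ α, a α * ((z • (P * V α - V α * P)) * Q).trace := by
  simp only [Matrix.sum_mul, smul_mul_assoc, mul_smul_comm, sub_mul, trace_sub,
    trace_smul, trace_sum, smul_eq_mul, ← Finset.sum_sub_distrib, Finset.mul_sum]
  exact Finset.sum_congr rfl fun α _ => by ring

lemma trace_mul_smul_one_add_sum_add [DecidableEq n] (s : R) (a : ι → R)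
    (F : ι → Matrix n n R) (P C : Matrix n n R) :
    (P * (s • (1 : Matrix n n R) + ∑ α, a α • F α + C)).trace
      = s * P.trace + ∑ α, a α * (P * F α).trace + (P * C).trace := by
  simp only [mul_add, trace_add, Matrix.mul_sum, mul_smul_comm, trace_smul, trace_sum, mul_one,
    smul_eq_mul]

end Trace

end Matrix

theorem super_hamiltonian_linear_state_cost_general
    (m n k : ℕ) (g : Matrix (Fin m) (Fin m) ℝ) (hg : g.PosDef)
    (F : Fin m → Matrix (Fin n) (Fin n) ℂ)
    (C₀ : Matrix (Fin n) (Fin n) ℂ)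
    (V : Fin m → Matrix (Fin n) (Fin n) ℂ)
    (Q : Matrix (Fin n) (Fin n) ℂ)
    (L : Matrix (Fin n) (Fin n) ℂ) (R : Fin k → Matrix (Fin n) (Fin n) ℂ)
    (P : Matrix (Fin n) (Fin n) ℂ) (hP1 : P.trace = 1)
    (w : (Fin m → ℝ) → Matrix (Fin n) (Fin n) ℂ)
    (hw : ∀ u, w u =
      Complex.I • (P * (∑ α, ((u α : ℂ) • V α)) - (∑ α, ((u α : ℂ) • V α)) * P)
        + (∑ j, (R j * P * (R j)ᴴ
            - (1 / 2 : ℂ) • ((R j)ᴴ * R j * P) - (1 / 2 : ℂ) • (P * ((R j)ᴴ * R j))))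
        + (L * P * Lᴴ - (1 / 2 : ℂ) • (Lᴴ * L * P) - (1 / 2 : ℂ) • (P * (Lᴴ * L))))
    (c : Fin m → ℝ)
    (hc : ∀ α, c α = ((P * F α).trace).re
        + (((Complex.I • (P * V α - V α * P)) * Q).trace).re) :
    (⨆ u : Fin m → ℝ,
        (-(((w u) * Q).trace).re
          - ((P * ((((1 / 2 : ℝ) * ∑ α, ∑ β, g α β * u α * u β : ℝ) : ℂ)
                • (1 : Matrix (Fin n) (Fin n) ℂ)
              + ∑ α, ((u α : ℂ) • F α) + C₀)).trace).re))
      = (1 / 2 : ℝ) * (∑ α, ∑ β, g⁻¹ α β * c α * c β)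
        - ((P * (C₀
            + (∑ j, ((R j)ᴴ * Q * R j
                - (1 / 2 : ℂ) • ((R j)ᴴ * R j * Q) - (1 / 2 : ℂ) • (Q * ((R j)ᴴ * R j))))
            + (Lᴴ * Q * L
                - (1 / 2 : ℂ) • (Lᴴ * L * Q) - (1 / 2 : ℂ) • (Q * (Lᴴ * L))))).trace).re := by
  rw [← dotProduct_mulVec_eq_sum_sum g⁻¹ c c,
    ← hg.iSup_neg_dotProduct_sub_half_dotProduct_mulVec_sub c]
  refine iSup_congr fun u => ?_
  rw [hw u, add_mul, add_mul, trace_add, trace_add, trace_smul_commutator_sum_mul,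
    Matrix.sum_mul, trace_sum, trace_dissipator_mul, trace_mul_smul_one_add_sum_add, hP1,
    dotProduct_mulVec_eq_sum_sum, dotProduct_comm c]
  simp only [trace_dissipator_mul, mul_add, trace_add, Matrix.mul_sum, trace_sum, mul_one,
    Complex.add_re, Complex.re_sum, Complex.re_ofReal_mul, Complex.ofReal_re, dotProduct, hc,
    Finset.sum_add_distrib]
  ring

/-- For linear-state cost `C(u) = ½g_{αβ}u^αu^β I + u^αF_α + C₀` and control Hamiltonian
`H(u) = u^αV_α`, the Pontryagin super-Hamiltonian of the Itô drift `w` evaluates to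
`𝓗_w(P,Q) = ½ g^{αβ} c_α c_β − Re tr(P(C₀ + 𝓛_R(Q) + 𝓛_L(Q)))` with
`c_α = tr(P F_α) + Re tr(i[P,V_α] Q)`. -/
theorem super_hamiltonian_linear_state_cost
    (m n k : ℕ) (g : Matrix (Fin m) (Fin m) ℝ) (hg : g.PosDef)
    (F : Fin m → Matrix (Fin n) (Fin n) ℂ) (hF : ∀ α, (F α).IsHermitian)
    (C₀ : Matrix (Fin n) (Fin n) ℂ) (hC₀ : C₀.IsHermitian)
    (V : Fin m → Matrix (Fin n) (Fin n) ℂ) (hV : ∀ α, (V α).IsHermitian)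
    (Q : Matrix (Fin n) (Fin n) ℂ) (hQ : Q.IsHermitian)
    (L : Matrix (Fin n) (Fin n) ℂ) (R : Fin k → Matrix (Fin n) (Fin n) ℂ)
    (P : Matrix (Fin n) (Fin n) ℂ) (hP : P.PosSemidef) (hP1 : P.trace = 1)
    (w : (Fin m → ℝ) → Matrix (Fin n) (Fin n) ℂ)
    (hw : ∀ u, w u =
      Complex.I • (P * (∑ α, ((u α : ℂ) • V α)) - (∑ α, ((u α : ℂ) • V α)) * P)
        + (∑ j, (R j * P * (R j)ᴴ
            - (1 / 2 : ℂ) • ((R j)ᴴ * R j * P) - (1 / 2 : ℂ) • (P * ((R j)ᴴ * R j))))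
        + (L * P * Lᴴ - (1 / 2 : ℂ) • (Lᴴ * L * P) - (1 / 2 : ℂ) • (P * (Lᴴ * L))))
    (c : Fin m → ℝ)
    (hc : ∀ α, c α = ((P * F α).trace).re
        + (((Complex.I • (P * V α - V α * P)) * Q).trace).re) :
    (⨆ u : Fin m → ℝ,
        (-(((w u) * Q).trace).re
          - ((P * ((((1 / 2 : ℝ) * ∑ α, ∑ β, g α β * u α * u β : ℝ) : ℂ)
                • (1 : Matrix (Fin n) (Fin n) ℂ)
              + ∑ α, ((u α : ℂ) • F α) + C₀)).trace).re))
      = (1 / 2 : ℝ) * (∑ α, ∑ β, g⁻¹ α β * c α * c β)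
        - ((P * (C₀
            + (∑ j, ((R j)ᴴ * Q * R j
                - (1 / 2 : ℂ) • ((R j)ᴴ * R j * Q) - (1 / 2 : ℂ) • (Q * ((R j)ᴴ * R j))))
            + (Lᴴ * Q * L
                - (1 / 2 : ℂ) • (Lᴴ * L * Q) - (1 / 2 : ℂ) • (Q * (Lᴴ * L))))).trace).re :=
  super_hamiltonian_linear_state_cost_general m n k g hg F C₀ V Q L R P hP1 w hw c hc
end

section
/- Let κ ∈ ℝ, let f : ℝ³ → ℝ be twice Fréchet differentiable, let p = (x,y,z) ∈ ℝ³, and define F on 2×2 complex matrices by F(τ) := f( Re tr(τ ς_x), Re tr(τ ς_y), Re tr(τ ς_z) ). Set ρ := ½(I + p·ς), L := ½κ ς_z and σ(ρ) := Lρ + ρL† − tr(ρ(L+L†))ρ. Then F is twice Fréchet differentiable and ½·D²F(ρ)[σ(ρ), σ(ρ)] = (κ²/2)·aᵀ (Hess f)(p) a, where a := (−zx, −zy, 1−z²) ∈ ℝ³; explicitly this equals (κ²/2)( x²z² f_xx + y²z² f_yy + (1−z²)² f_zz + 2xyz² f_xy − 2xz(1−z²) f_xz − 2yz(1−z²) f_yz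 ) evaluated at p. -/
open Matrix

attribute [local instance] Matrix.frobeniusNormedAddCommGroup Matrix.frobeniusNormedSpace

/-- The Pauli matrix `ς_x`. -/
noncomputable def pauliX : Matrix (Fin 2) (Fin 2) ℂ := !![0, 1; 1, 0]
/-- The Pauli matrix `ς_y`. -/
noncomputable def pauliY : Matrix (Fin 2) (Fin 2) ℂ := !![0, -Complex.I; Complex.I, 0]
/-- The Pauli matrix `ς_z`. -/
noncomputable def pauliZ : Matrix (Fin 2) (Fin 2) ℂ := !![1, 0; 0, -1]

/-! `F` is `f` composed with the real-linear Bloch map `B`, so by the chain rule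
`D²F(ρ)[σ, σ] = D²f(Bρ)[Bσ, Bσ]`. Here `Bρ = p`, and because `ς_z` anticommutes with `ς_x, ς_y`
one finds `σ(ρ) = (κ/2)(a·ς)`, whence `Bσ = κa`. The coordinate formula is the expansion of the
symmetric (Schwarz) bilinear form `D²f(p)` in the standard basis. -/

section
variable {𝕜 E F G : Type*} [NontriviallyNormedField 𝕜]
  [NormedAddCommGroup E] [NormedSpace 𝕜 E] [NormedAddCommGroup F] [NormedSpace 𝕜 F]
  [NormedAddCommGroup G] [NormedSpace 𝕜 G]

theorem fderiv_comp_clm (A : E →L[𝕜] F) {f : F → G} {x : E} (hf : DifferentiableAt 𝕜 f (A x)) :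
    fderiv 𝕜 (f ∘ A) x = (fderiv 𝕜 f (A x)).comp A :=
  (fderiv_comp x hf A.differentiableAt).trans (by rw [A.fderiv])

theorem hasFDerivAt_fderiv_comp_clm (A : E →L[𝕜] F) {f : F → G} {x : E}
    (hf : Differentiable 𝕜 f) (hf' : DifferentiableAt 𝕜 (fderiv 𝕜 f) (A x)) :
    HasFDerivAt (fderiv 𝕜 (f ∘ A))
      (((ContinuousLinearMap.compL 𝕜 E F G).flip A).comp ((fderiv 𝕜 (fderiv 𝕜 f) (A x)).comp A))
      x := by
  have hcomp : fderiv 𝕜 (f ∘ A) = fun y => (fderiv 𝕜 f (A y)).comp A :=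
    funext fun y => fderiv_comp_clm A (hf _)
  rw [hcomp]
  exact ((ContinuousLinearMap.compL 𝕜 E F G).flip A).hasFDerivAt.comp x
    (hf'.hasFDerivAt.comp x A.hasFDerivAt)

theorem fderiv_fderiv_comp_clm_apply (A : E →L[𝕜] F) {f : F → G} {x : E}
    (hf : Differentiable 𝕜 f) (hf' : DifferentiableAt 𝕜 (fderiv 𝕜 f) (A x)) (v w : E) :
    fderiv 𝕜 (fderiv 𝕜 (f ∘ A)) x v w = fderiv 𝕜 (fderiv 𝕜 f) (A x) (A v) (A w) := by
  rw [(hasFDerivAt_fderiv_comp_clm A hf hf').fderiv]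
  rfl

theorem Differentiable.fderiv_comp_clm (A : E →L[𝕜] F) {f : F → G}
    (hf : Differentiable 𝕜 f) (hf' : Differentiable 𝕜 (fderiv 𝕜 f)) :
    Differentiable 𝕜 (fderiv 𝕜 (f ∘ A)) :=
  fun _ => (hasFDerivAt_fderiv_comp_clm A hf (hf' _)).differentiableAt

end

theorem ContinuousLinearMap.apply_self_fin_three {R : Type*} [NormedField R]
    (B : (Fin 3 → R) →L[R] (Fin 3 → R) →L[R] R) (hB : ∀ v w, B v w = B w v) (v : Fin 3 → R) :
    B v v = v 0 ^ 2 * B (Pi.single 0 1) (Pi.single 0 1)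
      + v 1 ^ 2 * B (Pi.single 1 1) (Pi.single 1 1) + v 2 ^ 2 * B (Pi.single 2 1) (Pi.single 2 1)
      + 2 * v 0 * v 1 * B (Pi.single 0 1) (Pi.single 1 1)
      + 2 * v 0 * v 2 * B (Pi.single 0 1) (Pi.single 2 1)
      + 2 * v 1 * v 2 * B (Pi.single 1 1) (Pi.single 2 1) := by
  have hv : v = v 0 • Pi.single 0 1 + v 1 • Pi.single 1 1 + v 2 • Pi.single 2 1 := by
    funext j; fin_cases j <;> simp
  conv_lhs => rw [hv]
  simp only [map_add, map_smul, _root_.add_apply, _root_.smul_apply, smul_eq_mul,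
    hB (Pi.single 1 1) (Pi.single 0 1), hB (Pi.single 2 1) (Pi.single 0 1),
    hB (Pi.single 2 1) (Pi.single 1 1)]
  ring

noncomputable def fluctuation {n : Type*} [Fintype n] (L ρ : Matrix n n ℂ) : Matrix n n ℂ :=
  L * ρ + ρ * Lᴴ - (ρ * (L + Lᴴ)).trace • ρ

noncomputable def pauliDot (v : Fin 3 → ℝ) : Matrix (Fin 2) (Fin 2) ℂ :=
  (v 0 : ℂ) • pauliX + (v 1 : ℂ) • pauliY + (v 2 : ℂ) • pauliZ

noncomputable def blochState (p : Fin 3 → ℝ) : Matrix (Fin 2) (Fin 2) ℂ :=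
  (1 / 2 : ℂ) • (1 + pauliDot p)

noncomputable def blochCoords : Matrix (Fin 2) (Fin 2) ℂ →L[ℝ] (Fin 3 → ℝ) :=
  LinearMap.toContinuousLinearMap
    { toFun := fun τ =>
        ![((τ * pauliX).trace).re, ((τ * pauliY).trace).re, ((τ * pauliZ).trace).re]
      map_add' := fun τ τ' => by
        funext i; fin_cases i <;> simp [add_mul, trace_add]
      map_smul' := fun c τ => by
        funext i; fin_cases i <;> simp [trace_smul] }

theorem blochCoords_apply (τ : Matrix (Fin 2) (Fin 2) ℂ) :
    blochCoords τ = ![((τ * pauliX).trace).re, ((τ * pauliY).trace).re, ((τ * pauliZ).trace).re] :=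
  rfl

theorem blochCoords_ofReal_smul (r : ℝ) (τ : Matrix (Fin 2) (Fin 2) ℂ) :
    blochCoords ((r : ℂ) • τ) = r • blochCoords τ := by
  rw [Complex.coe_smul, map_smul]

theorem blochCoords_one : blochCoords 1 = 0 := by
  funext i; fin_cases i <;> simp [blochCoords_apply, pauliX, pauliY, pauliZ, trace_fin_two]

theorem blochCoords_pauliDot (v : Fin 3 → ℝ) : blochCoords (pauliDot v) = (2 : ℝ) • v := by
  funext i
  fin_cases i <;> simp [blochCoords_apply, pauliDot, pauliX, pauliY, pauliZ, trace_fin_two] <;> ring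

theorem blochCoords_blochState (p : Fin 3 → ℝ) : blochCoords (blochState p) = p := by
  rw [blochState, show (1 / 2 : ℂ) = ((1 / 2 : ℝ) : ℂ) by push_cast; rfl, blochCoords_ofReal_smul,
    map_add, blochCoords_one, blochCoords_pauliDot, zero_add, smul_smul]
  norm_num

theorem pauliZ_isHermitian : pauliZ.IsHermitian := by
  ext i j; fin_cases i <;> fin_cases j <;> simp [pauliZ]

theorem fluctuation_smul_pauliZ_blochState (c : ℝ) (p : Fin 3 → ℝ) :
    fluctuation ((c : ℂ) • pauliZ) (blochState p)
      = (c : ℂ) • pauliDot ![-(p 2 * p 0), -(p 2 * p 1), 1 - p 2 ^ 2] := by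
  have hL : ((c : ℂ) • pauliZ)ᴴ = (c : ℂ) • pauliZ := by
    rw [conjTranspose_smul, pauliZ_isHermitian.eq, Complex.star_def, Complex.conj_ofReal]
  rw [fluctuation, hL]
  ext i j
  fin_cases i <;> fin_cases j <;>
    · simp [blochState, pauliDot, pauliX, pauliY, pauliZ, one_fin_two, trace_fin_two]
      ring

/-- In Bloch coordinates, the Itô correction term `½⟨σ(ρ)⊗σ(ρ),(δ⊗δ)F⟩ = ½D²F(ρ)[σ(ρ),σ(ρ)]`
of the diffusive Bellman equation for `F(τ) = f(Re tr(τς_x), Re tr(τς_y), Re tr(τς_z))`,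
state `ρ = ½(I + p·ς)` and measurement coupling `L = ½κς_z` equals
`(κ²/2)·aᵀ(Hess f)(p)a` with `a = (−zx, −zy, 1−z²)`, i.e.
`(κ²/2)(x²z²f_xx + y²z²f_yy + (1−z²)²f_zz + 2xyz²f_xy − 2xz(1−z²)f_xz − 2yz(1−z²)f_yz)`. -/
theorem qubit_ito_correction_bloch (κ : ℝ) (f : (Fin 3 → ℝ) → ℝ)
    (hf : Differentiable ℝ f ∧ Differentiable ℝ (fderiv ℝ f)) (p : Fin 3 → ℝ) :
    let F : Matrix (Fin 2) (Fin 2) ℂ → ℝ := fun τ =>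
      f ![((τ * pauliX).trace).re, ((τ * pauliY).trace).re, ((τ * pauliZ).trace).re]
    let ρ : Matrix (Fin 2) (Fin 2) ℂ :=
      (1 / 2 : ℂ) • ((1 : Matrix (Fin 2) (Fin 2) ℂ)
        + (p 0 : ℂ) • pauliX + (p 1 : ℂ) • pauliY + (p 2 : ℂ) • pauliZ)
    let L : Matrix (Fin 2) (Fin 2) ℂ := ((1 / 2 : ℝ) * κ : ℂ) • pauliZ
    let σρ : Matrix (Fin 2) (Fin 2) ℂ := L * ρ + ρ * Lᴴ - (ρ * (L + Lᴴ)).trace • ρ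
    let a : Fin 3 → ℝ := ![-(p 2 * p 0), -(p 2 * p 1), 1 - p 2 ^ 2]
    let hess : Fin 3 → Fin 3 → ℝ := fun i j =>
      fderiv ℝ (fderiv ℝ f) p (Pi.single i 1) (Pi.single j 1)
    (Differentiable ℝ F ∧ Differentiable ℝ (fderiv ℝ F)) ∧
    (1 / 2 : ℝ) * fderiv ℝ (fderiv ℝ F) ρ σρ σρ
        = κ ^ 2 / 2 * fderiv ℝ (fderiv ℝ f) p a a ∧
    κ ^ 2 / 2 * fderiv ℝ (fderiv ℝ f) p a a
        = κ ^ 2 / 2 * ((p 0) ^ 2 * (p 2) ^ 2 * hess 0 0 + (p 1) ^ 2 * (p 2) ^ 2 * hess 1 1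
            + (1 - (p 2) ^ 2) ^ 2 * hess 2 2
            + 2 * (p 0) * (p 1) * (p 2) ^ 2 * hess 0 1
            - 2 * (p 0) * (p 2) * (1 - (p 2) ^ 2) * hess 0 2
            - 2 * (p 1) * (p 2) * (1 - (p 2) ^ 2) * hess 1 2) := by
  intro F ρ L σρ a hess
  have hρ : ρ = blochState p := by simp only [ρ, blochState, pauliDot, add_assoc]
  have hBσ : blochCoords σρ = κ • a := by
    have hL : L = ((κ / 2 : ℝ) : ℂ) • pauliZ := by simp only [L]; push_cast; ring_nf
    rw [show σρ = fluctuation L ρ from rfl, hL, hρ, fluctuation_smul_pauliZ_blochState,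
      blochCoords_ofReal_smul, blochCoords_pauliDot, smul_smul]
    exact congrArg (· • a) (by ring)
  have hsymm : ∀ v w, fderiv ℝ (fderiv ℝ f) p v w = fderiv ℝ (fderiv ℝ f) p w v :=
    second_derivative_symmetric (fun y => (hf.1 y).hasFDerivAt) (hf.2 p).hasFDerivAt
  refine ⟨⟨hf.1.comp blochCoords.differentiable, hf.1.fderiv_comp_clm blochCoords hf.2⟩, ?_, ?_⟩
  · have hD2 : fderiv ℝ (fderiv ℝ F) ρ σρ σρ = fderiv ℝ (fderiv ℝ f) p (κ • a) (κ • a) := by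
      rw [← blochCoords_blochState p, ← hρ, ← hBσ]
      exact fderiv_fderiv_comp_clm_apply blochCoords hf.1 (hf.2 _) σρ σρ
    rw [hD2, map_smul, map_smul, _root_.smul_apply, smul_eq_mul, smul_eq_mul]
    ring
  · rw [ContinuousLinearMap.apply_self_fin_three _ hsymm a]
    simp only [hess, a, cons_val_zero, cons_val_one, cons_val_two, head_cons, tail_cons]
    ring
end
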